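/- Let a > 0, let n ≥ 1 be an integer, and let B be a real number with |B| ≤ 1/2. Then the entire function S(w) = 2π·B·sin²(a·n·w/2)/sinh(a·π·n) belongs to W_{2π/a} (that is, its restriction to D satisfies the defining conditions of W_{2π/a}), and for every real λ the limit of (1/π)·Im S(λ + iμ) as real μ → π⁻ equals B·sin(a·n·λ). -/

import Mathlib

open Complex MeasureTheory Filter

noncomputable section

lemma aux_sinh_mul_le {s x : ℝ} (hs0 : 0 ≤ s) (hs1 : s ≤ 1) (hx : 0 ≤ x) :
    Real.sinh (s * x) ≤ s * Real.sinh x := by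
  set f : ℝ → ℝ := fun y => s * Real.sinh y - Real.sinh (s * y) with hf
  have hder : ∀ y : ℝ, HasDerivAt f (s * Real.cosh y - Real.cosh (s * y) * (s * 1)) y := by
    intro y
    exact ((Real.hasDerivAt_sinh y).const_mul s).sub
      ((Real.hasDerivAt_sinh (s * y)).comp y ((hasDerivAt_id y).const_mul s))
  have hmono : MonotoneOn f (Set.Ici 0) := by
    apply monotoneOn_of_deriv_nonneg (convex_Ici 0)
    · exact Continuous.continuousOn (by fun_prop)
    · exact fun y _ => (hder y).differentiableAt.differentiableWithinAt
    · intro y hy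
      rw [interior_Ici, Set.mem_Ioi] at hy
      rw [(hder y).deriv]
      have hc : Real.cosh (s * y) ≤ Real.cosh y := by
        rw [Real.cosh_le_cosh, _root_.abs_of_nonneg (by positivity : (0:ℝ) ≤ s * y),
          _root_.abs_of_nonneg hy.le]
        nlinarith
      nlinarith
  have h0 : f 0 ≤ f x := hmono Set.self_mem_Ici hx hx
  simp only [hf, mul_zero, Real.sinh_zero, sub_zero, sub_nonneg] at h0
  linarith [h0]

lemma aux_im_helper (C p1 p2 q1 q2 K : ℝ) :
    (((C : ℂ) * ((p1 : ℂ) * (p2 : ℂ) + (q1 : ℂ) * (q2 : ℂ) * Complex.I) ^ 2 /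
      (K : ℂ)).im) = C * (2 * (p1 * p2) * (q1 * q2)) / K := by
  simp [pow_two, Complex.div_ofReal_im, Complex.mul_im, Complex.mul_re,
    Complex.add_re, Complex.add_im, Complex.I_re, Complex.I_im,
    Complex.ofReal_re, Complex.ofReal_im]
  ring

lemma aux_sin_sq_add_nat_mul_pi (z : ℂ) (n : ℕ) :
    Complex.sin (z + (n : ℂ) * (Real.pi : ℂ)) ^ 2 = Complex.sin z ^ 2 := by
  induction n with
  | zero => simp
  | succ m ih =>
    have : z + ((m + 1 : ℕ) : ℂ) * (Real.pi : ℂ)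
        = (z + (m : ℂ) * (Real.pi : ℂ)) + (Real.pi : ℂ) := by push_cast; ring
    rw [this, Complex.sin_add_pi, neg_sq, ih]

/-- The open horizontal strip `D = {w : ℂ | -π < Im w < π}`. -/
def strip : Set ℂ := {w : ℂ | -Real.pi < w.im ∧ w.im < Real.pi}

/-- The class `OM₊`: functions analytic on the slit plane `ℂ \ (-∞,0]`,
nonnegative real on the positive real axis, with nonnegative imaginary part
on the upper half-plane. -/
def OMplus (f : ℂ → ℂ) : Prop :=
  DifferentiableOn ℂ f Complex.slitPlane ∧
  (∀ x : ℝ, 0 < x → ∃ t : ℝ, 0 ≤ t ∧ f (x : ℂ) = (t : ℂ)) ∧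
  (∀ z : ℂ, 0 < z.im → 0 ≤ (f z).im)

/-- The class `W_p`: functions analytic on the strip `D` with
`|Im S(w)| ≤ Im w / 2` on the upper half of the strip, `S(0) = 0`,
even, and `p`-periodic. -/
def Wclass (p : ℝ) (S : ℂ → ℂ) : Prop :=
  DifferentiableOn ℂ S strip ∧
  (∀ w ∈ strip, 0 ≤ w.im → |(S w).im| ≤ w.im / 2) ∧
  S 0 = 0 ∧
  (∀ w ∈ strip, S (-w) = S w) ∧
  (∀ w ∈ strip, S (w + (p : ℂ)) = S w)

/-- For `a > 0`, `n ≥ 1` and real `|B| ≤ 1/2`, the entire function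
`S(w) = 2π·B·sin²(anw/2)/sinh(aπn)` belongs to `W_{2π/a}`, and for every real
`λ` the limit of `(1/π)·Im S(λ+iμ)` as `μ → π⁻` equals `B·sin(anλ)`. -/
theorem stmt_13 (a : ℝ) (ha : 0 < a) (n : ℕ) (hn : 1 ≤ n) (B : ℝ)
    (hB : |B| ≤ 1 / 2) (S : ℂ → ℂ)
    (hS : ∀ w : ℂ, S w = ((2 * Real.pi * B : ℝ) : ℂ) *
      Complex.sin (((a * (n : ℝ) : ℝ) : ℂ) * w / 2) ^ 2 /
      Complex.sinh ((a * Real.pi * (n : ℝ) : ℝ))) :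
    Wclass (2 * Real.pi / a) S ∧
    ∀ l : ℝ, Filter.Tendsto
      (fun μ : ℝ => (1 / Real.pi) * (S ((l : ℂ) + (μ : ℂ) * Complex.I)).im)
      (nhdsWithin Real.pi (Set.Iio Real.pi))
      (nhds (B * Real.sin (a * (n : ℝ) * l))) := by
  have hπ : 0 < Real.pi := Real.pi_pos
  have hnpos : (0:ℝ) < (n:ℝ) := by exact_mod_cast Nat.pos_of_ne_zero (by omega)
  have hc : (0:ℝ) < a * n := by positivity
  have hK : 0 < Real.sinh (a * Real.pi * n) := by
    rw [Real.sinh_pos_iff]; positivity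
  -- key formula for the imaginary part
  have key : ∀ w : ℂ, (S w).im =
      Real.pi * B * Real.sin (a * n * w.re) * Real.sinh (a * n * w.im) /
        Real.sinh (a * Real.pi * n) := by
    intro w
    rw [hS]
    have h1 : ((a * (n : ℝ) : ℝ) : ℂ) * w / 2
        = ((a * n / 2 * w.re : ℝ) : ℂ) + ((a * n / 2 * w.im : ℝ) : ℂ) * I := by
      conv_lhs => rw [← Complex.re_add_im w]
      push_cast; ring
    rw [h1, Complex.sin_add_mul_I, ← Complex.ofReal_sin, ← Complex.ofReal_cos,
      ← Complex.ofReal_sinh, ← Complex.ofReal_cosh, ← Complex.ofReal_sinh,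
      aux_im_helper]
    have hx2 : a * ↑n * w.re = 2 * (a * n / 2 * w.re) := by ring
    have hy2 : a * ↑n * w.im = 2 * (a * n / 2 * w.im) := by ring
    rw [hx2, hy2, Real.sin_two_mul, Real.sinh_two_mul]
    ring
  constructor
  · refine ⟨?_, ?_, ?_, ?_, ?_⟩
    · -- differentiable
      have hdiff : Differentiable ℂ S := by
        have hSe : S = fun w => ((2 * Real.pi * B : ℝ) : ℂ) *
            Complex.sin (((a * (n : ℝ) : ℝ) : ℂ) * w / 2) ^ 2 /
            Complex.sinh ((a * Real.pi * (n : ℝ) : ℝ)) := funext hS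
        rw [hSe]
        apply Differentiable.div_const
        exact (differentiable_const _).mul
          ((Complex.differentiable_sin.comp (by fun_prop)).pow 2)
      exact hdiff.differentiableOn
    · -- bound on imaginary part
      intro w hw him
      rw [key]
      have hwπ : w.im < Real.pi := hw.2
      have hsinh_nonneg : 0 ≤ Real.sinh (a * n * w.im) := by
        rw [Real.sinh_nonneg_iff]; positivity
      have hsinh_bound : Real.pi * Real.sinh (a * n * w.im)
          ≤ w.im * Real.sinh (a * Real.pi * n) := by
        have h := aux_sinh_mul_le (s := w.im / Real.pi) (x := a * n * Real.pi)
          (by positivity) (by rw [div_le_one hπ]; exact hwπ.le) (by positivity)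
        have harg : w.im / Real.pi * (a * n * Real.pi) = a * n * w.im := by
          field_simp
        rw [harg] at h
        calc Real.pi * Real.sinh (a * ↑n * w.im)
            ≤ Real.pi * (w.im / Real.pi * Real.sinh (a * ↑n * Real.pi)) := by
              exact mul_le_mul_of_nonneg_left h hπ.le
          _ = w.im * Real.sinh (a * Real.pi * ↑n) := by
              rw [show a * ↑n * Real.pi = a * Real.pi * ↑n from by ring]
              field_simp
      rw [abs_div, _root_.abs_of_pos hK, div_le_iff₀ hK]
      have habs : |Real.pi * B * Real.sin (a * ↑n * w.re) * Real.sinh (a * ↑n * w.im)|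
          ≤ Real.pi * (1/2) * 1 * Real.sinh (a * ↑n * w.im) := by
        rw [abs_mul, abs_mul, abs_mul, _root_.abs_of_pos hπ,
          _root_.abs_of_nonneg hsinh_nonneg]
        have h1 : |Real.sin (a * ↑n * w.re)| ≤ 1 := Real.abs_sin_le_one _
        have h2 : |B| * |Real.sin (a * ↑n * w.re)| ≤ 1 / 2 * 1 :=
          mul_le_mul hB h1 (abs_nonneg _) (by norm_num)
        nlinarith [mul_le_mul_of_nonneg_left
          (mul_le_mul_of_nonneg_right h2 hsinh_nonneg) hπ.le]
      calc |Real.pi * B * Real.sin (a * ↑n * w.re) * Real.sinh (a * ↑n * w.im)|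
          ≤ Real.pi * (1/2) * 1 * Real.sinh (a * ↑n * w.im) := habs
        _ = (Real.pi * Real.sinh (a * ↑n * w.im)) / 2 := by ring
        _ ≤ (w.im * Real.sinh (a * Real.pi * ↑n)) / 2 := by linarith
        _ = w.im / 2 * Real.sinh (a * Real.pi * ↑n) := by ring
    · rw [hS]; simp
    · intro w _
      rw [hS, hS]
      have h2 : ((a * (n : ℝ) : ℝ) : ℂ) * (-w) / 2
          = -(((a * (n : ℝ) : ℝ) : ℂ) * w / 2) := by ring
      rw [h2, Complex.sin_neg, neg_sq]
    · intro w _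
      rw [hS, hS]
      have harg : ((a * (n : ℝ) : ℝ) : ℂ) * (w + ((2 * Real.pi / a : ℝ) : ℂ)) / 2
          = ((a * (n : ℝ) : ℝ) : ℂ) * w / 2 + (n : ℂ) * (Real.pi : ℂ) := by
        have ha' : (a : ℂ) ≠ 0 := by exact_mod_cast ha.ne'
        push_cast
        field_simp
      rw [harg, aux_sin_sq_add_nat_mul_pi]
  · intro l
    have hfun : (fun μ : ℝ => (1 / Real.pi) * (S ((l : ℂ) + (μ : ℂ) * Complex.I)).im)
        = fun μ : ℝ => (1 / Real.pi) *
          (Real.pi * B * Real.sin (a * n * l) * Real.sinh (a * n * μ) /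
            Real.sinh (a * Real.pi * n)) := by
      funext μ
      rw [key]
      simp
    rw [hfun]
    have hcont : Continuous (fun μ : ℝ => (1 / Real.pi) *
        (Real.pi * B * Real.sin (a * n * l) * Real.sinh (a * n * μ) /
          Real.sinh (a * Real.pi * n))) := by fun_prop
    have hval : (1 / Real.pi) *
        (Real.pi * B * Real.sin (a * n * l) * Real.sinh (a * n * Real.pi) /
          Real.sinh (a * Real.pi * n)) = B * Real.sin (a * n * l) := by
      rw [show a * (n:ℝ) * Real.pi = a * Real.pi * (n:ℝ) from by ring]
      field_simp
    rw [← hval]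
    exact (hcont.tendsto Real.pi).mono_left nhdsWithin_le_nhds
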